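/- Let K be a field, let g and h be Lie algebras over K, let ρ: g → gl(h) be a representation of g on the vector space h and σ: h → gl(g) a representation of h on the vector space g, and suppose the matched pair equations hold for (g, h, ρ, σ). Then the vector space direct sum g ⊕ h, equipped with the bracket ⁅X1 ⊕ Y1, X2 ⊕ Y2⁆ = (⁅X1,X2⁆ + σ_{Y1}(X2) − σ_{Y2}(X1)) ⊕ (⁅Y1,Y2⁆ + ρ_{X1}(Y2) − ρ_{X2}(Y1)), is a Lie algebra over K (the bracket is bilinear, alternating, and satisfies the Jacobi identity), and the inclusions X ↦ X ⊕ 0 and Y ↦ 0 ⊕ Y are Lie algebra homomorphisms. (This is the vacant double Lie algebroid correspondence over a one-point base: the diagonal Lie algebra g ⋈ h of a matched pair of Lie algebras.) -/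

import Mathlib

attribute [local instance 100] LieRing.ofAssociativeRing

/-- A `K`-bilinear, alternating bracket on the `K`-vector space `V` satisfying the
Jacobi identity, i.e. a Lie algebra structure on `V` over `K`. -/
structure IsLieBracket (K V : Type*) [Field K] [AddCommGroup V] [Module K V]
    (br : V → V → V) : Prop where
  add_left : ∀ x y z, br (x + y) z = br x z + br y z
  smul_left : ∀ (k : K) (x z : V), br (k • x) z = k • br x z
  add_right : ∀ x y z, br x (y + z) = br x y + br x z
  smul_right : ∀ (k : K) (x z : V), br x (k • z) = k • br x z
  alternate : ∀ x, br x x = 0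
  jacobi : ∀ x y z, br (br x y) z + br (br y z) x + br (br z x) y = 0

/-- The bracket on the direct sum `g ⊕ h` determined by actions `ρ` of `g` on `h`
and `σ` of `h` on `g`:
`⁅X₁ ⊕ Y₁, X₂ ⊕ Y₂⁆ = (⁅X₁,X₂⁆ + σ_{Y₁} X₂ − σ_{Y₂} X₁) ⊕ (⁅Y₁,Y₂⁆ + ρ_{X₁} Y₂ − ρ_{X₂} Y₁)`. -/
def matchedPairBracket {K g h : Type*} [Field K]
    [LieRing g] [LieAlgebra K g] [LieRing h] [LieAlgebra K h]
    (ρ : g →ₗ⁅K⁆ Module.End K h) (σ : h →ₗ⁅K⁆ Module.End K g) :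
    g × h → g × h → g × h :=
  fun p q => (⁅p.1, q.1⁆ + σ p.2 q.1 - σ q.2 p.1,
              ⁅p.2, q.2⁆ + ρ p.1 q.2 - ρ q.1 p.2)

/-
The g-component of the Jacobiator of the bracket on g × h collects three kinds of terms:
those in g alone, which cancel by the Jacobi identity of g; terms σ_Y ⁅X₁, X₂⁆, which the
matched pair equation for σ trades for brackets in g and terms σ_{ρ_X Y} X'; and
σ_{⁅Y₁, Y₂⁆} X, which cancels against σ_{Y₁} σ_{Y₂} X − σ_{Y₂} σ_{Y₁} X because σ is a
representation. Exchanging the roles of (g, σ) and (h, ρ) turns the h-component into a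
g-component, so the matched pair equation for ρ handles it in the same way.
-/

namespace MatchedPair

variable {K g h : Type*} [Field K] [LieRing g] [LieAlgebra K g] [LieRing h] [LieAlgebra K h]
  (ρ : g →ₗ⁅K⁆ Module.End K h) (σ : h →ₗ⁅K⁆ Module.End K g)

theorem bracket_comm (p q : g × h) :
    matchedPairBracket ρ σ q p = -matchedPairBracket ρ σ p q := by
  simp only [matchedPairBracket, Prod.neg_mk, Prod.mk.injEq, ← lie_skew p.1, ← lie_skew p.2]
  constructor <;> abel

theorem bracket_self (p : g × h) : matchedPairBracket ρ σ p p = 0 := by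
  simp [matchedPairBracket, Prod.ext_iff]

theorem bracket_add_left (p q r : g × h) :
    matchedPairBracket ρ σ (p + q) r = matchedPairBracket ρ σ p r + matchedPairBracket ρ σ q r := by
  simp only [matchedPairBracket, Prod.fst_add, Prod.snd_add, Prod.mk_add_mk, Prod.mk.injEq,
    LinearMap.add_apply, map_add, add_lie]
  constructor <;> abel

theorem bracket_smul_left (k : K) (p q : g × h) :
    matchedPairBracket ρ σ (k • p) q = k • matchedPairBracket ρ σ p q := by
  simp only [matchedPairBracket, Prod.smul_fst, Prod.smul_snd, Prod.smul_mk,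
    LinearMap.smul_apply, map_smul, smul_lie, smul_add, smul_sub]

theorem fst_bracket_jacobi
    (hσ : ∀ (Y : h) (X₁ X₂ : g), σ Y ⁅X₁, X₂⁆ =
      ⁅σ Y X₁, X₂⁆ + ⁅X₁, σ Y X₂⁆ + σ (ρ X₂ Y) X₁ - σ (ρ X₁ Y) X₂)
    (p q r : g × h) :
    (matchedPairBracket ρ σ (matchedPairBracket ρ σ p q) r
      + matchedPairBracket ρ σ (matchedPairBracket ρ σ q r) p
      + matchedPairBracket ρ σ (matchedPairBracket ρ σ r p) q).1 = 0 := by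
  obtain ⟨X₁, Y₁⟩ := p
  obtain ⟨X₂, Y₂⟩ := q
  obtain ⟨X₃, Y₃⟩ := r
  simp only [matchedPairBracket, Prod.fst_add, map_add, map_sub, LieHom.map_lie,
    Ring.lie_def, Module.End.mul_apply, LinearMap.sub_apply, LinearMap.add_apply,
    add_lie, sub_lie, hσ]
  -- orient the brackets of g cyclically and remove `⁅X₃, ⁅X₁, X₂⁆⁆` by Jacobi; then `abel` closes it
  rw [← lie_skew ⁅X₁, X₂⁆ X₃, ← lie_skew ⁅X₂, X₃⁆ X₁, ← lie_skew ⁅X₃, X₁⁆ X₂,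
    ← lie_skew X₁ (σ Y₃ X₂), ← lie_skew X₂ (σ Y₁ X₃), ← lie_skew X₃ (σ Y₂ X₁),
    show (⁅X₃, ⁅X₁, X₂⁆⁆ : g) = -(⁅X₁, ⁅X₂, X₃⁆⁆ + ⁅X₂, ⁅X₃, X₁⁆⁆) from
      eq_neg_of_add_eq_zero_right (lie_jacobi X₁ X₂ X₃)]
  abel

theorem snd_bracket_jacobi
    (hρ : ∀ (X : g) (Y₁ Y₂ : h), ρ X ⁅Y₁, Y₂⁆ =
      ⁅ρ X Y₁, Y₂⁆ + ⁅Y₁, ρ X Y₂⁆ + ρ (σ Y₂ X) Y₁ - ρ (σ Y₁ X) Y₂)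
    (p q r : g × h) :
    (matchedPairBracket ρ σ (matchedPairBracket ρ σ p q) r
      + matchedPairBracket ρ σ (matchedPairBracket ρ σ q r) p
      + matchedPairBracket ρ σ (matchedPairBracket ρ σ r p) q).2 = 0 :=
  -- `matchedPairBracket σ ρ p.swap q.swap` is `(matchedPairBracket ρ σ p q).swap` by `rfl`
  fst_bracket_jacobi σ ρ hρ p.swap q.swap r.swap

theorem isLieBracket
    (hρ : ∀ (X : g) (Y₁ Y₂ : h), ρ X ⁅Y₁, Y₂⁆ =
      ⁅ρ X Y₁, Y₂⁆ + ⁅Y₁, ρ X Y₂⁆ + ρ (σ Y₂ X) Y₁ - ρ (σ Y₁ X) Y₂)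
    (hσ : ∀ (Y : h) (X₁ X₂ : g), σ Y ⁅X₁, X₂⁆ =
      ⁅σ Y X₁, X₂⁆ + ⁅X₁, σ Y X₂⁆ + σ (ρ X₂ Y) X₁ - σ (ρ X₁ Y) X₂) :
    IsLieBracket K (g × h) (matchedPairBracket ρ σ) where
  add_left := bracket_add_left ρ σ
  smul_left := bracket_smul_left ρ σ
  add_right p q r := by
    rw [bracket_comm, bracket_add_left, neg_add, ← bracket_comm, ← bracket_comm]
  smul_right k p q := by
    rw [bracket_comm, bracket_smul_left, ← smul_neg, ← bracket_comm]
  alternate := bracket_self ρ σ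
  jacobi p q r := Prod.ext (fst_bracket_jacobi ρ σ hσ p q r) (snd_bracket_jacobi ρ σ hρ p q r)

theorem bracket_inl (X₁ X₂ : g) :
    matchedPairBracket ρ σ (X₁, 0) (X₂, 0) = (⁅X₁, X₂⁆, 0) := by
  simp [matchedPairBracket]

theorem bracket_inr (Y₁ Y₂ : h) :
    matchedPairBracket ρ σ (0, Y₁) (0, Y₂) = (0, ⁅Y₁, Y₂⁆) := by
  simp [matchedPairBracket]

end MatchedPair

/-- **The diagonal Lie algebra `g ⋈ h` of a matched pair of Lie algebras.**
Given representations `ρ : g → gl(h)` and `σ : h → gl(g)` satisfying the matched pair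
equations, the bracket
`⁅X₁ ⊕ Y₁, X₂ ⊕ Y₂⁆ = (⁅X₁,X₂⁆ + σ_{Y₁} X₂ − σ_{Y₂} X₁) ⊕ (⁅Y₁,Y₂⁆ + ρ_{X₁} Y₂ − ρ_{X₂} Y₁)`
makes the direct sum `g ⊕ h` a Lie algebra over `K`, and the inclusions of `g` and `h`
are Lie algebra homomorphisms. -/
theorem matchedPair_to_lieAlgebra
    (K g h : Type*) [Field K]
    [LieRing g] [LieAlgebra K g] [LieRing h] [LieAlgebra K h]
    (ρ : g →ₗ⁅K⁆ Module.End K h) (σ : h →ₗ⁅K⁆ Module.End K g)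
    (mp1 : ∀ (X : g) (Y₁ Y₂ : h), ρ X ⁅Y₁, Y₂⁆ =
      ⁅ρ X Y₁, Y₂⁆ + ⁅Y₁, ρ X Y₂⁆ + ρ (σ Y₂ X) Y₁ - ρ (σ Y₁ X) Y₂)
    (mp2 : ∀ (Y : h) (X₁ X₂ : g), σ Y ⁅X₁, X₂⁆ =
      ⁅σ Y X₁, X₂⁆ + ⁅X₁, σ Y X₂⁆ + σ (ρ X₂ Y) X₁ - σ (ρ X₁ Y) X₂) :
    IsLieBracket K (g × h) (matchedPairBracket ρ σ)
    ∧ (∀ X₁ X₂ : g, matchedPairBracket ρ σ (X₁, 0) (X₂, 0) = (⁅X₁, X₂⁆, 0))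
    ∧ (∀ Y₁ Y₂ : h, matchedPairBracket ρ σ (0, Y₁) (0, Y₂) = (0, ⁅Y₁, Y₂⁆)) :=
  ⟨MatchedPair.isLieBracket ρ σ mp1 mp2, MatchedPair.bracket_inl ρ σ, MatchedPair.bracket_inr ρ σ⟩
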